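/- arXiv:2309.13722 — 5 statements merged into one kernel-verified Lean document; each statement's English description precedes it below -/
import Mathlib

section
/- Let K ∈ ℕ, 𝔵₀ < 𝔵₁ < ... < 𝔵_K be real numbers and f: [𝔵₀,𝔵_K] → ℝ a function. Then the piecewise linear interpolation ℒ of f at the nodes 𝔵₀,...,𝔵_K (constant outside [𝔵₀,𝔵_K]) is Lipschitz continuous on ℝ with Lipschitz constant max_{k∈{1,...,K}} w_f(|𝔵_k − 𝔵_{k−1}|)/|𝔵_k − 𝔵_{k−1}|, i.e., for all x,y ∈ ℝ: |ℒ(x) − ℒ(y)| ≤ [max_k w_f(|𝔵_k − 𝔵_{k−1}|)/|𝔵_k − 𝔵_{k−1}|]·|x−y|. -/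
open scoped ENNReal

/-- The modulus of continuity `w_f(h) = sup({|f x - f y| : x,y ∈ A, |x-y| ≤ h} ∪ {0})`. -/
noncomputable def wMod (A : Set ℝ) (f : ℝ → ℝ) (h : ℝ≥0∞) : ℝ≥0∞ :=
  sSup ({e : ℝ≥0∞ | ∃ x ∈ A, ∃ y ∈ A,
    ENNReal.ofReal |x - y| ≤ h ∧ e = ENNReal.ofReal |f x - f y|} ∪ {0})

lemma xmono (K : ℕ) (𝔵 : ℕ → ℝ) (hx : ∀ k, k < K → 𝔵 k < 𝔵 (k + 1)) :
    ∀ i j, i ≤ j → j ≤ K → 𝔵 i ≤ 𝔵 j := by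
  intro i j hij hjK
  induction j with
  | zero =>
    have h0 : i = 0 := by omega
    simp [h0]
  | succ n ih =>
    rcases Nat.lt_or_ge i (n + 1) with h | h
    · exact le_trans (ih (by omega) (by omega)) (le_of_lt (hx n (by omega)))
    · have : i = n + 1 := by omega
      simp [this]

lemma glue1 {g : ℝ → ℝ} {b : ℝ} (h1 : MonotoneOn g (Set.Iic b))
    (h2 : MonotoneOn g (Set.Ici b)) : Monotone g := by
  intro x y hxy
  rcases le_total x b with hx | hx
  · rcases le_total y b with hy | hy
    · exact h1 (Set.mem_Iic.mpr hx) (Set.mem_Iic.mpr hy) hxy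
    · exact le_trans (h1 (Set.mem_Iic.mpr hx) (Set.mem_Iic.mpr le_rfl) hx)
        (h2 (Set.mem_Ici.mpr le_rfl) (Set.mem_Ici.mpr hy) hy)
  · exact h2 (Set.mem_Ici.mpr hx) (Set.mem_Ici.mpr (le_trans hx hxy)) hxy

lemma glue2 {g : ℝ → ℝ} {a b : ℝ} (hab : a ≤ b) (h1 : MonotoneOn g (Set.Icc a b))
    (h2 : MonotoneOn g (Set.Ici b)) : MonotoneOn g (Set.Ici a) := by
  intro x hx y hy hxy
  rcases le_total y b with hyb | hyb
  · exact h1 ⟨hx, le_trans hxy hyb⟩ ⟨hy, hyb⟩ hxy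
  · rcases le_total x b with hxb | hxb
    · exact le_trans (h1 ⟨hx, hxb⟩ ⟨hab, le_rfl⟩ hxb)
        (h2 (Set.mem_Ici.mpr le_rfl) (Set.mem_Ici.mpr hyb) hyb)
    · exact h2 (Set.mem_Ici.mpr hxb) (Set.mem_Ici.mpr hyb) hxy

lemma glue3 {g : ℝ → ℝ} {a b c : ℝ} (hab : a ≤ b) (hbc : b ≤ c)
    (h1 : MonotoneOn g (Set.Icc a b)) (h2 : MonotoneOn g (Set.Icc b c)) :
    MonotoneOn g (Set.Icc a c) := by
  intro x hx y hy hxy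
  rcases le_total y b with hyb | hyb
  · exact h1 ⟨hx.1, le_trans hxy hyb⟩ ⟨hy.1, hyb⟩ hxy
  · rcases le_total x b with hxb | hxb
    · exact le_trans (h1 ⟨hx.1, hxb⟩ ⟨hab, le_rfl⟩ hxb) (h2 ⟨le_rfl, hbc⟩ ⟨hyb, hy.2⟩ hyb)
    · exact h2 ⟨hxb, hx.2⟩ ⟨hyb, hy.2⟩ hxy

lemma mono_of_pieces (K : ℕ) (hK : 1 ≤ K) (𝔵 : ℕ → ℝ) (g : ℝ → ℝ)
    (hx : ∀ k, k < K → 𝔵 k < 𝔵 (k + 1))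
    (h0 : MonotoneOn g (Set.Iic (𝔵 0)))
    (hKr : MonotoneOn g (Set.Ici (𝔵 K)))
    (hmidm : ∀ k, 1 ≤ k → k ≤ K → MonotoneOn g (Set.Icc (𝔵 (k - 1)) (𝔵 k))) :
    Monotone g := by
  have hmono := xmono K 𝔵 hx
  have key : ∀ k, 1 ≤ k → k ≤ K → MonotoneOn g (Set.Icc (𝔵 0) (𝔵 k)) := by
    intro k
    induction k with
    | zero => omega
    | succ n ih =>
      intro _ hnK
      by_cases hn : n = 0
      · subst hn
        simpa using hmidm 1 le_rfl hnK
      · have ihn := ih (by omega) (by omega)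
        have h2 := hmidm (n + 1) (by omega) hnK
        simp only [Nat.add_sub_cancel] at h2
        exact glue3 (hmono 0 n (by omega) (by omega)) (le_of_lt (hx n (by omega))) ihn h2
  exact glue1 h0 (glue2 (hmono 0 K (by omega) le_rfl) (key K hK le_rfl) hKr)

lemma lip_real (K : ℕ) (hK : 1 ≤ K) (𝔵 : ℕ → ℝ) (f : ℝ → ℝ) (ℒ : ℝ → ℝ)
    (hx : ∀ k, k < K → 𝔵 k < 𝔵 (k + 1))
    (hleft : ∀ x : ℝ, x < 𝔵 0 → ℒ x = f (𝔵 0))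
    (hright : ∀ x : ℝ, 𝔵 K ≤ x → ℒ x = f (𝔵 K))
    (hmid : ∀ k, 1 ≤ k → k ≤ K → ∀ x : ℝ, 𝔵 (k - 1) ≤ x → x < 𝔵 k →
      ℒ x = f (𝔵 (k - 1)) + ((x - 𝔵 (k - 1)) / (𝔵 k - 𝔵 (k - 1))) * (f (𝔵 k) - f (𝔵 (k - 1))))
    (C : ℝ) (hC : 0 ≤ C)
    (hslope : ∀ k, 1 ≤ k → k ≤ K → |f (𝔵 k) - f (𝔵 (k - 1))| ≤ C * (𝔵 k - 𝔵 (k - 1))) :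
    ∀ x y : ℝ, |ℒ x - ℒ y| ≤ C * |x - y| := by
  -- node values
  have hnode : ∀ k, k ≤ K → ℒ (𝔵 k) = f (𝔵 k) := by
    intro k hkK
    rcases eq_or_lt_of_le hkK with h | h
    · subst h
      exact hright _ le_rfl
    · have := hmid (k + 1) (by omega) (by omega) (𝔵 k) (by simp) (hx k h)
      simpa using this
  -- closed-interval formula
  have hclosed : ∀ k, 1 ≤ k → k ≤ K → ∀ x : ℝ, 𝔵 (k - 1) ≤ x → x ≤ 𝔵 k →
      ℒ x = f (𝔵 (k - 1)) + ((x - 𝔵 (k - 1)) / (𝔵 k - 𝔵 (k - 1))) * (f (𝔵 k) - f (𝔵 (k - 1))) := by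
    intro k hk1 hkK x hxl hxr
    rcases lt_or_eq_of_le hxr with h | h
    · exact hmid k hk1 hkK x hxl h
    · subst h
      have hab : 𝔵 (k - 1) < 𝔵 k := by
        have := hx (k - 1) (by omega)
        have hk : k - 1 + 1 = k := by omega
        rwa [hk] at this
      rw [hnode k hkK, div_self (ne_of_gt (sub_pos.mpr hab))]
      ring
  -- the key per-piece bound
  have key : ∀ k, 1 ≤ k → k ≤ K → ∀ x ∈ Set.Icc (𝔵 (k - 1)) (𝔵 k),
      ∀ y ∈ Set.Icc (𝔵 (k - 1)) (𝔵 k), x ≤ y → |ℒ y - ℒ x| ≤ C * (y - x) := by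
    intro k hk1 hkK x hxm y hym hxy
    have hab : 𝔵 (k - 1) < 𝔵 k := by
      have := hx (k - 1) (by omega)
      have hk : k - 1 + 1 = k := by omega
      rwa [hk] at this
    have hba : (0:ℝ) < 𝔵 k - 𝔵 (k - 1) := sub_pos.mpr hab
    have e : ℒ y - ℒ x = (y - x) / (𝔵 k - 𝔵 (k - 1)) * (f (𝔵 k) - f (𝔵 (k - 1))) := by
      rw [hclosed k hk1 hkK x hxm.1 hxm.2, hclosed k hk1 hkK y hym.1 hym.2]
      ring
    have hr0 : (0:ℝ) ≤ (y - x) / (𝔵 k - 𝔵 (k - 1)) :=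
      div_nonneg (by linarith) (le_of_lt hba)
    rw [e, abs_mul, abs_of_nonneg hr0]
    calc (y - x) / (𝔵 k - 𝔵 (k - 1)) * |f (𝔵 k) - f (𝔵 (k - 1))|
        ≤ (y - x) / (𝔵 k - 𝔵 (k - 1)) * (C * (𝔵 k - 𝔵 (k - 1))) :=
          mul_le_mul_of_nonneg_left (hslope k hk1 hkK) hr0
      _ = C * (y - x) := by field_simp
  -- ℒ constant on tails
  have htl : ∀ x : ℝ, x ≤ 𝔵 0 → ℒ x = f (𝔵 0) := by
    intro x hx0
    rcases lt_or_eq_of_le hx0 with h | h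
    · exact hleft x h
    · subst h; exact hnode 0 (by omega)
  -- monotone combinations
  have m1 : Monotone (fun t => C * t - ℒ t) := by
    apply mono_of_pieces K hK 𝔵 _ hx
    · intro x hxm y hym hxy
      simp only [htl x hxm, htl y hym]
      have : C * x ≤ C * y := mul_le_mul_of_nonneg_left hxy hC
      linarith
    · intro x hxm y hym hxy
      simp only [hright x hxm, hright y hym]
      have : C * x ≤ C * y := mul_le_mul_of_nonneg_left hxy hC
      linarith
    · intro k hk1 hkK x hxm y hym hxy
      have := key k hk1 hkK x hxm y hym hxy
      have h2 := abs_le.mp this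
      simp only
      linarith [h2.2]
  have m2 : Monotone (fun t => C * t + ℒ t) := by
    apply mono_of_pieces K hK 𝔵 _ hx
    · intro x hxm y hym hxy
      simp only [htl x hxm, htl y hym]
      have : C * x ≤ C * y := mul_le_mul_of_nonneg_left hxy hC
      linarith
    · intro x hxm y hym hxy
      simp only [hright x hxm, hright y hym]
      have : C * x ≤ C * y := mul_le_mul_of_nonneg_left hxy hC
      linarith
    · intro k hk1 hkK x hxm y hym hxy
      have := key k hk1 hkK x hxm y hym hxy
      have h2 := abs_le.mp this
      simp only
      linarith [h2.1]
  -- conclude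
  have main : ∀ x y : ℝ, x ≤ y → |ℒ x - ℒ y| ≤ C * |x - y| := by
    intro x y hxy
    have h1 : C * x - ℒ x ≤ C * y - ℒ y := m1 hxy
    have h2 : C * x + ℒ x ≤ C * y + ℒ y := m2 hxy
    rw [abs_sub_comm, abs_sub_comm x y, abs_of_nonneg (sub_nonneg.mpr hxy)]
    rw [abs_le]
    constructor <;> linarith
  intro x y
  rcases le_total x y with h | h
  · exact main x y h
  · rw [abs_sub_comm, abs_sub_comm x y]
    exact main y x h

theorem stmt4 (K : ℕ) (hK : 1 ≤ K) (𝔵 : ℕ → ℝ) (f : ℝ → ℝ) (ℒ : ℝ → ℝ)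
    (hx : ∀ k, k < K → 𝔵 k < 𝔵 (k + 1))
    (hleft : ∀ x : ℝ, x < 𝔵 0 → ℒ x = f (𝔵 0))
    (hright : ∀ x : ℝ, 𝔵 K ≤ x → ℒ x = f (𝔵 K))
    (hmid : ∀ k, 1 ≤ k → k ≤ K → ∀ x : ℝ, 𝔵 (k - 1) ≤ x → x < 𝔵 k →
      ℒ x = f (𝔵 (k - 1)) + ((x - 𝔵 (k - 1)) / (𝔵 k - 𝔵 (k - 1))) * (f (𝔵 k) - f (𝔵 (k - 1)))) :
    ∀ x y : ℝ, ENNReal.ofReal |ℒ x - ℒ y| ≤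
      (⨆ k ∈ Finset.Icc 1 K,
        wMod (Set.Icc (𝔵 0) (𝔵 K)) f (ENNReal.ofReal |𝔵 k - 𝔵 (k - 1)|)
          / ENNReal.ofReal |𝔵 k - 𝔵 (k - 1)|) * ENNReal.ofReal |x - y| := by
  set L : ℝ≥0∞ := ⨆ k ∈ Finset.Icc 1 K,
      wMod (Set.Icc (𝔵 0) (𝔵 K)) f (ENNReal.ofReal |𝔵 k - 𝔵 (k - 1)|)
        / ENNReal.ofReal |𝔵 k - 𝔵 (k - 1)| with hL
  have hmono := xmono K 𝔵 hx
  intro x y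
  by_cases hxy : x = y
  · subst hxy; simp
  by_cases hLtop : L = ⊤
  · rw [hLtop, ENNReal.top_mul]
    · exact le_top
    · simp only [ne_eq, ENNReal.ofReal_eq_zero, not_le]
      exact abs_pos.mpr (sub_ne_zero.mpr hxy)
  -- slope bound
  set C : ℝ := L.toReal with hCdef
  have hC : 0 ≤ C := ENNReal.toReal_nonneg
  have hslope : ∀ k, 1 ≤ k → k ≤ K → |f (𝔵 k) - f (𝔵 (k - 1))| ≤ C * (𝔵 k - 𝔵 (k - 1)) := by
    intro k hk1 hkK
    have hab : 𝔵 (k - 1) < 𝔵 k := by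
      have := hx (k - 1) (by omega)
      have hk : k - 1 + 1 = k := by omega
      rwa [hk] at this
    have ha : 𝔵 (k - 1) ∈ Set.Icc (𝔵 0) (𝔵 K) :=
      ⟨hmono 0 (k - 1) (by omega) (by omega), hmono (k - 1) K (by omega) le_rfl⟩
    have hb : 𝔵 k ∈ Set.Icc (𝔵 0) (𝔵 K) :=
      ⟨hmono 0 k (by omega) hkK, hmono k K hkK le_rfl⟩
    have hmem : ENNReal.ofReal |f (𝔵 k) - f (𝔵 (k - 1))| ∈
        ({e : ℝ≥0∞ | ∃ x ∈ Set.Icc (𝔵 0) (𝔵 K), ∃ y ∈ Set.Icc (𝔵 0) (𝔵 K),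
          ENNReal.ofReal |x - y| ≤ ENNReal.ofReal |𝔵 k - 𝔵 (k - 1)| ∧
          e = ENNReal.ofReal |f x - f y|} ∪ {0}) :=
      Set.mem_union_left _ ⟨𝔵 k, hb, 𝔵 (k - 1), ha, le_rfl, rfl⟩
    have h1 : ENNReal.ofReal |f (𝔵 k) - f (𝔵 (k - 1))| ≤
        wMod (Set.Icc (𝔵 0) (𝔵 K)) f (ENNReal.ofReal |𝔵 k - 𝔵 (k - 1)|) := le_sSup hmem
    have hd0 : ENNReal.ofReal |𝔵 k - 𝔵 (k - 1)| ≠ 0 := by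
      simp only [ne_eq, ENNReal.ofReal_eq_zero, not_le]
      exact abs_pos.mpr (sub_ne_zero.mpr (ne_of_gt hab))
    have hdt : ENNReal.ofReal |𝔵 k - 𝔵 (k - 1)| ≠ ⊤ := ENNReal.ofReal_ne_top
    have h2 : wMod (Set.Icc (𝔵 0) (𝔵 K)) f (ENNReal.ofReal |𝔵 k - 𝔵 (k - 1)|)
        / ENNReal.ofReal |𝔵 k - 𝔵 (k - 1)| ≤ L := by
      rw [hL]
      exact le_iSup₂ (f := fun k (_ : k ∈ Finset.Icc 1 K) =>
        wMod (Set.Icc (𝔵 0) (𝔵 K)) f (ENNReal.ofReal |𝔵 k - 𝔵 (k - 1)|)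
          / ENNReal.ofReal |𝔵 k - 𝔵 (k - 1)|) k (Finset.mem_Icc.mpr ⟨hk1, hkK⟩)
    have h3 : wMod (Set.Icc (𝔵 0) (𝔵 K)) f (ENNReal.ofReal |𝔵 k - 𝔵 (k - 1)|)
        ≤ L * ENNReal.ofReal |𝔵 k - 𝔵 (k - 1)| := (ENNReal.div_le_iff hd0 hdt).mp h2
    have h4 : ENNReal.ofReal |f (𝔵 k) - f (𝔵 (k - 1))| ≤ L * ENNReal.ofReal |𝔵 k - 𝔵 (k - 1)| :=
      le_trans h1 h3
    have hnt : L * ENNReal.ofReal |𝔵 k - 𝔵 (k - 1)| ≠ ⊤ := ENNReal.mul_ne_top hLtop hdt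
    have h5 : |f (𝔵 k) - f (𝔵 (k - 1))| ≤ (L * ENNReal.ofReal |𝔵 k - 𝔵 (k - 1)|).toReal := by
      rw [← ENNReal.toReal_ofReal (abs_nonneg (f (𝔵 k) - f (𝔵 (k - 1))))]
      exact ENNReal.toReal_mono hnt h4
    rw [ENNReal.toReal_mul, ENNReal.toReal_ofReal (abs_nonneg _)] at h5
    rwa [abs_of_pos (sub_pos.mpr hab)] at h5
  have := lip_real K hK 𝔵 f ℒ hx hleft hright hmid C hC hslope x y
  calc ENNReal.ofReal |ℒ x - ℒ y| ≤ ENNReal.ofReal (C * |x - y|) := ENNReal.ofReal_le_ofReal this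
    _ = ENNReal.ofReal C * ENNReal.ofReal |x - y| := ENNReal.ofReal_mul hC
    _ = L * ENNReal.ofReal |x - y| := by rw [hCdef, ENNReal.ofReal_toReal hLtop]
end

section
/- Let γ ∈ ℕ with γ ≥ 2 and let b₁ < b₂ < ... < b_γ be real numbers. Then there exist unique c₀, c₁, ..., c_γ ∈ ℝ such that for all k ∈ {0,1,...,γ}: 𝟙_{{γ}}(k)·c₀ + Σ_{i=1}^γ c_i·(b_i)^k = 𝟙_{{γ−1}}(k)·γ^{−1}. Moreover, with these coefficients it holds for all x ∈ ℝ that c₀ + Σ_{i=1}^γ c_i·(x + b_i)^γ = x. -/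
/-! The conditions for `k < γ` say that the moments `∑ cᵢ bᵢᵏ` of `(c₁, …, c_γ)` are prescribed:
a transposed Vandermonde system, uniquely solvable because the `bᵢ` are distinct; the condition
for `k = γ` then fixes `c₀`. By the binomial theorem the coefficient of `x ^ (γ - k)` in
`∑ cᵢ (x + bᵢ) ^ γ` is `γ.choose k` times the `k`-th moment, so of the terms with `k < γ` only
`x` (from `k = γ - 1`) survives, and the constant term `∑ cᵢ bᵢ ^ γ` is cancelled by `c₀`. -/

open Finset Matrix

theorem sum_mul_pow_eq_vecMul_vandermonde {ι R : Type*} [CommRing R] {s : Finset ι} (b c : ι → R)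
    (k : Fin #s) :
    ∑ i ∈ s, c i * b i ^ (k : ℕ) =
      ((c ∘ (↑) ∘ s.equivFin.symm) ᵥ* vandermonde (b ∘ (↑) ∘ s.equivFin.symm)) k := by
  simp only [vecMul, dotProduct, vandermonde_apply, Function.comp_apply]
  rw [Equiv.sum_comp s.equivFin.symm (fun i => c i * b i ^ (k : ℕ))]
  exact (sum_coe_sort s _).symm

section Moments

variable {ι K : Type*} [Field K] {s : Finset ι} {b : ι → K}

theorem isUnit_vandermonde_comp_equivFin (hb : Set.InjOn b s) :
    IsUnit (vandermonde (b ∘ (↑) ∘ s.equivFin.symm)) := by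
  rw [isUnit_iff_isUnit_det, isUnit_iff_ne_zero, det_vandermonde_ne_zero_iff]
  exact hb.injective.comp s.equivFin.symm.injective

theorem eqOn_of_sum_mul_pow_eq (hb : Set.InjOn b s) {c c' : ι → K}
    (h : ∀ k < #s, ∑ i ∈ s, c i * b i ^ k = ∑ i ∈ s, c' i * b i ^ k) : Set.EqOn c c' s := by
  intro i hi
  have hcomp : c ∘ (↑) ∘ s.equivFin.symm = c' ∘ (↑) ∘ s.equivFin.symm :=
    vecMul_injective_iff_isUnit.2 (isUnit_vandermonde_comp_equivFin hb) <| funext fun k => by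
      dsimp only
      rw [← sum_mul_pow_eq_vecMul_vandermonde, ← sum_mul_pow_eq_vecMul_vandermonde, h k k.2]
  simpa using congr_fun hcomp (s.equivFin ⟨i, hi⟩)

theorem exists_sum_mul_pow_eq (hb : Set.InjOn b s) (d : ℕ → K) :
    ∃ c : ι → K, ∀ k < #s, ∑ i ∈ s, c i * b i ^ k = d k := by
  classical
  obtain ⟨w, hw⟩ := vecMul_surjective_iff_isUnit.2 (isUnit_vandermonde_comp_equivFin hb)
    (fun k : Fin #s => d k)
  let c : ι → K := fun i => if hi : i ∈ s then w (s.equivFin ⟨i, hi⟩) else 0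
  have hcw : c ∘ (↑) ∘ s.equivFin.symm = w := funext fun j => by simp [c]
  refine ⟨c, fun k hk => ?_⟩
  rw [sum_mul_pow_eq_vecMul_vandermonde b _ ⟨k, hk⟩, hcw]
  exact congr_fun hw ⟨k, hk⟩

end Moments

theorem sum_mul_add_pow_eq_sum_range {ι R : Type*} [CommRing R] (s : Finset ι) (c b : ι → R)
    (n : ℕ) (x : R) :
    ∑ i ∈ s, c i * (x + b i) ^ n =
      ∑ k ∈ range (n + 1), (∑ i ∈ s, c i * b i ^ k) * x ^ (n - k) * n.choose k := by
  simp_rw [add_comm x, add_pow, mul_sum, sum_mul]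
  rw [sum_comm]
  exact sum_congr rfl fun k _ => sum_congr rfl fun i _ => by ring

theorem sum_mul_add_pow_eq_of_moments {ι K : Type*} [Field K] {s : Finset ι} {c b : ι → K} {n : ℕ}
    (hn : (n : K) ≠ 0)
    (hm : ∀ k < n, ∑ i ∈ s, c i * b i ^ k = if k = n - 1 then (n : K)⁻¹ else 0) (x : K) :
    ∑ i ∈ s, c i * (x + b i) ^ n = x + ∑ i ∈ s, c i * b i ^ n := by
  have hn₀ : n ≠ 0 := by rintro rfl; exact hn Nat.cast_zero
  rw [sum_mul_add_pow_eq_sum_range, sum_range_succ, Nat.sub_self, pow_zero, Nat.choose_self,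
    Nat.cast_one, mul_one, mul_one]
  congr 1
  calc ∑ k ∈ range n, (∑ i ∈ s, c i * b i ^ k) * x ^ (n - k) * n.choose k
      = ∑ k ∈ range n, if k = n - 1 then (n : K)⁻¹ * x ^ (n - k) * n.choose k else 0 :=
        sum_congr rfl fun k hk => by rw [hm k (mem_range.1 hk), ite_mul, ite_mul, zero_mul, zero_mul]
    _ = x := by
        rw [sum_ite_eq', if_pos (mem_range.2 (by omega)), Nat.sub_sub_self (by omega), pow_one,
          Nat.choose_symm (by omega), Nat.choose_one_right]
        field_simp

theorem forall_le_ite_add_eq_iff {K : Type*} [AddCommMonoid K] {n : ℕ} {c₀ : K} {m d : ℕ → K} :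
    (∀ k ≤ n, (if k = n then c₀ else 0) + m k = d k) ↔ (∀ k < n, m k = d k) ∧ c₀ + m n = d n := by
  refine ⟨fun h => ⟨fun k hk => ?_, by simpa using h n le_rfl⟩, fun ⟨hlt, hn⟩ k hk => ?_⟩
  · simpa [hk.ne] using h k hk.le
  · rcases hk.lt_or_eq with hk | rfl
    · simpa [hk.ne] using hlt k hk
    · simpa using hn

theorem stmt10 (γ : ℕ) (hγ : 2 ≤ γ) (b : ℕ → ℝ)
    (hb : ∀ i j, 1 ≤ i → i < j → j ≤ γ → b i < b j) :
    ∃ c : ℕ → ℝ,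
      (∀ k ≤ γ,
        (if k = γ then c 0 else 0) + ∑ i ∈ Finset.Icc 1 γ, c i * (b i) ^ k
          = if k = γ - 1 then (γ : ℝ)⁻¹ else 0) ∧
      (∀ c' : ℕ → ℝ,
        (∀ k ≤ γ,
          (if k = γ then c' 0 else 0) + ∑ i ∈ Finset.Icc 1 γ, c' i * (b i) ^ k
            = if k = γ - 1 then (γ : ℝ)⁻¹ else 0) →
        ∀ k ≤ γ, c' k = c k) ∧
      (∀ x : ℝ, c 0 + ∑ i ∈ Finset.Icc 1 γ, c i * (x + b i) ^ γ = x) := by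
  simp only [forall_le_ite_add_eq_iff, if_neg (show γ ≠ γ - 1 by omega)]
  have hinj : Set.InjOn b (Icc 1 γ) := StrictMonoOn.injOn fun i hi j hj hij =>
    hb i j (mem_Icc.1 hi).1 hij (mem_Icc.1 hj).2
  have hcard : #(Icc 1 γ) = γ := by simp
  obtain ⟨c₁, hc₁⟩ := exists_sum_mul_pow_eq hinj fun k => if k = γ - 1 then (γ : ℝ)⁻¹ else 0
  rw [hcard] at hc₁
  obtain ⟨c, hc₀, hcc₁⟩ : ∃ c : ℕ → ℝ,
      c 0 = -∑ i ∈ Icc 1 γ, c₁ i * b i ^ γ ∧ Set.EqOn c c₁ (Icc 1 γ) :=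
    ⟨Function.update c₁ 0 _, Function.update_self .., fun i hi =>
      Function.update_of_ne (by rintro rfl; simp at hi) _ _⟩
  have hmoments (k : ℕ) : ∑ i ∈ Icc 1 γ, c i * b i ^ k = ∑ i ∈ Icc 1 γ, c₁ i * b i ^ k :=
    sum_congr rfl fun i hi => by rw [hcc₁ hi]
  have hsystem (k : ℕ) (hk : k < γ) :
      ∑ i ∈ Icc 1 γ, c i * b i ^ k = if k = γ - 1 then (γ : ℝ)⁻¹ else 0 :=
    (hmoments k).trans (hc₁ k hk)
  have hc₀' : c 0 + ∑ i ∈ Icc 1 γ, c i * b i ^ γ = 0 := by rw [hc₀, hmoments, neg_add_cancel]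
  refine ⟨c, ⟨hsystem, hc₀'⟩, ?_, fun x => ?_⟩
  · rintro c' ⟨hsystem', hc'₀⟩ k hk
    have hc'c : Set.EqOn c' c (Icc 1 γ) := eqOn_of_sum_mul_pow_eq hinj fun k hk => by
      rw [hcard] at hk
      rw [hsystem' k hk, hsystem k hk]
    rcases k.eq_zero_or_pos with rfl | hk₀
    · have : ∑ i ∈ Icc 1 γ, c' i * b i ^ γ = ∑ i ∈ Icc 1 γ, c i * b i ^ γ :=
        sum_congr rfl fun i hi => by rw [hc'c hi]
      linarith
    · exact hc'c (mem_Icc.2 ⟨hk₀, hk⟩)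
  · have hγ₀ : (γ : ℝ) ≠ 0 := Nat.cast_ne_zero.2 (by omega)
    rw [sum_mul_add_pow_eq_of_moments hγ₀ hsystem x]
    linarith
end

section
/- Let ε ∈ (0,1], L ∈ [0,∞), q ∈ (1,∞), let b ∈ [1,∞) satisfy max{1,2L} = ε·b^{q−1}, let ℒ: ℝ → ℝ be any function that is L-Lipschitz on ℝ and agrees with an L-Lipschitz function f: ℝ → ℝ at the points −b and b, and satisfies sup_{x∈[−b,b]} |ℒ(x) − f(x)| ≤ ε. Then for all x ∈ ℝ: |ℒ(x) − f(x)| ≤ ε·max{1, |x|^q}. -/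
theorem stmt11 (ε L q b : ℝ) (hε : ε ∈ Set.Ioc (0 : ℝ) 1) (hL : 0 ≤ L) (hq : 1 < q)
    (hb : 1 ≤ b) (hbe : max 1 (2 * L) = ε * b ^ (q - 1))
    (f ℒ : ℝ → ℝ)
    (hf : ∀ x y : ℝ, |f x - f y| ≤ L * |x - y|)
    (hℒ : ∀ x y : ℝ, |ℒ x - ℒ y| ≤ L * |x - y|)
    (hmb : ℒ (-b) = f (-b)) (hpb : ℒ b = f b)
    (herr : ∀ x ∈ Set.Icc (-b) b, |ℒ x - f x| ≤ ε) :
    ∀ x : ℝ, |ℒ x - f x| ≤ ε * max 1 (|x| ^ q) := by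
  intro x
  obtain ⟨hε0, hε1⟩ := hε
  by_cases hx : |x| ≤ b
  · have h1 : |ℒ x - f x| ≤ ε := herr x (abs_le.mp hx)
    calc |ℒ x - f x| ≤ ε := h1
      _ = ε * 1 := (mul_one ε).symm
      _ ≤ ε * max 1 (|x| ^ q) := by
          exact mul_le_mul_of_nonneg_left (le_max_left _ _) hε0.le
  · push_neg at hx
    have hxb : b < |x| := hx
    have hx1 : (1 : ℝ) < |x| := lt_of_le_of_lt hb hxb
    have hx0 : (0 : ℝ) < |x| := lt_trans one_pos hx1
    -- choose endpoint s with ℒ s = f s and |x - s| ≤ |x|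
    obtain ⟨s, hs, hxs⟩ : ∃ s : ℝ, ℒ s = f s ∧ |x - s| ≤ |x| := by
      rcases le_or_gt 0 x with h0 | h0
      · refine ⟨b, hpb, ?_⟩
        have : x - b ≥ 0 ∨ True := Or.inr trivial
        rw [abs_of_nonneg h0] at hxb ⊢
        rw [abs_of_nonneg (by linarith : (0:ℝ) ≤ x - b)]
        linarith [le_trans zero_le_one hb]
      · refine ⟨-b, hmb, ?_⟩
        rw [abs_of_neg h0] at hxb ⊢
        rw [abs_of_nonpos (by linarith : x - (-b) ≤ 0)]
        linarith [le_trans zero_le_one hb]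
    have key : |ℒ x - f x| ≤ 2 * L * |x| := by
      have h1 := hℒ x s
      have h2 := hf s x
      have : |ℒ x - f x| ≤ |ℒ x - ℒ s| + |f s - f x| := by
        rw [hs] at *
        calc |ℒ x - f x| = |(ℒ x - f s) + (f s - f x)| := by ring_nf
          _ ≤ |ℒ x - f s| + |f s - f x| := abs_add_le _ _
      have h3 : |s - x| = |x - s| := abs_sub_comm s x
      calc |ℒ x - f x| ≤ |ℒ x - ℒ s| + |f s - f x| := this
        _ ≤ L * |x - s| + L * |s - x| := add_le_add h1 h2
        _ = 2 * L * |x - s| := by rw [h3]; ring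
        _ ≤ 2 * L * |x| := by nlinarith [abs_nonneg (x - s)]
    have h4 : 2 * L * |x| ≤ max 1 (2 * L) * |x| :=
      mul_le_mul_of_nonneg_right (le_max_right _ _) hx0.le
    have h5 : b ^ (q - 1) ≤ |x| ^ (q - 1) :=
      Real.rpow_le_rpow (by linarith) hxb.le (by linarith)
    have h6 : |x| ^ (q - 1) * |x| = |x| ^ q := by
      rw [← Real.rpow_add_one hx0.ne' (q - 1)]
      ring_nf
    calc |ℒ x - f x| ≤ 2 * L * |x| := key
      _ ≤ max 1 (2 * L) * |x| := h4
      _ = ε * b ^ (q - 1) * |x| := by rw [hbe]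
      _ ≤ ε * |x| ^ (q - 1) * |x| := by
          have := mul_le_mul_of_nonneg_left h5 hε0.le
          nlinarith
      _ = ε * |x| ^ q := by rw [mul_assoc, h6]
      _ ≤ ε * max 1 (|x| ^ q) :=
          mul_le_mul_of_nonneg_left (le_max_right _ _) hε0.le
end

section
/- Let K ∈ ℕ, 𝔵₀ < 𝔵₁ < ... < 𝔵_K and f₀, f₁, ..., f_K be real numbers, and define coefficients c_k = (f_{min{k+1,K}} − f_k)/(𝔵_{min{k+1,K}} − 𝔵_{min{k,K−1}}) − (f_k − f_{max{k−1,0}})/(𝔵_{max{k,1}} − 𝔵_{max{k−1,0}}) for k ∈ {0,...,K}. Then for all x ∈ ℝ: f₀ + Σ_{k=0}^K c_k·max{x − 𝔵_k, 0} = ℒ(x), where ℒ is the piecewise linear interpolation of the values f₀,...,f_K at the nodes 𝔵₀,...,𝔵_K (constant outside [𝔵₀, 𝔵_K]). -/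
/-!
Writing `τ k` for the slope of the interpolant on its `k`-th piece (zero on the two constant
pieces), the coefficient `c k` is the jump `τ (k + 1) - τ k` of the slope at `𝔵 k`.  For `x`
lying in the `j`-th piece exactly the nodes `𝔵 0, …, 𝔵 (j - 1)` are `≤ x`, so the ReLU sum
reduces to `∑ n < j, c n * (x - 𝔵 n)`, and summing the slope jumps piece by piece gives
`fv (j - 1) + τ j * (x - 𝔵 (j - 1))`, the value of the interpolant on that piece.
-/

open Finset

namespace LinearInterp

/-- Pieces are indexed by their right node: piece `k` is `[𝔵 (k - 1), 𝔵 k)`, with piece `0` the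
ray left of `𝔵 0` and piece `K + 1` the ray right of `𝔵 K`. -/
noncomputable def slope (K : ℕ) (𝔵 fv : ℕ → ℝ) (k : ℕ) : ℝ :=
  if k = 0 ∨ K < k then 0 else (fv k - fv (k - 1)) / (𝔵 k - 𝔵 (k - 1))

variable {K k : ℕ} {𝔵 fv : ℕ → ℝ}

theorem slope_zero : slope K 𝔵 fv 0 = 0 := by
  simp [slope]

theorem slope_of_lt (h : K < k) : slope K 𝔵 fv k = 0 := by
  simp [slope, h]

theorem slope_succ_of_lt (h : k < K) :
    slope K 𝔵 fv (k + 1) = (fv (k + 1) - fv k) / (𝔵 (k + 1) - 𝔵 k) := by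
  rw [slope, if_neg (by omega), Nat.add_sub_cancel]

theorem slope_mul_sub (hx : ∀ k < K, 𝔵 k < 𝔵 (k + 1)) (h : k < K) :
    slope K 𝔵 fv (k + 1) * (𝔵 (k + 1) - 𝔵 k) = fv (k + 1) - fv k := by
  rw [slope_succ_of_lt h, div_mul_cancel₀ _ (sub_ne_zero.mpr (hx k h).ne')]

theorem div_min_eq_slope (hk : k ≤ K) :
    (fv (min (k + 1) K) - fv k) / (𝔵 (min (k + 1) K) - 𝔵 (min k (K - 1)))
      = slope K 𝔵 fv (k + 1) := by
  rcases hk.lt_or_eq with hk | rfl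
  · rw [slope_succ_of_lt hk, min_eq_left hk, min_eq_left (by omega)]
  · simp [slope_of_lt (Nat.lt_succ_self k)]

theorem div_max_eq_slope (hk : k ≤ K) :
    (fv k - fv (max (k - 1) 0)) / (𝔵 (max k 1) - 𝔵 (max (k - 1) 0)) = slope K 𝔵 fv k := by
  rcases Nat.eq_zero_or_pos k with rfl | hk0
  · simp [slope_zero]
  · simp [slope, hk0.ne', hk.not_gt, max_eq_left (Nat.one_le_iff_ne_zero.mpr hk0.ne')]

end LinearInterp

open LinearInterp

theorem add_sum_range_sub_mul_eq {τ 𝔵 f : ℕ → ℝ} (t : ℝ) (hτ : τ 0 = 0) :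
    ∀ m, (∀ n < m, τ (n + 1) * (𝔵 (n + 1) - 𝔵 n) = f (n + 1) - f n) →
      f 0 + ∑ n ∈ range (m + 1), (τ (n + 1) - τ n) * (t - 𝔵 n) = f m + τ (m + 1) * (t - 𝔵 m)
  | 0, _ => by simp [hτ]
  | m + 1, h => by
    rw [sum_range_succ, ← add_assoc, add_sum_range_sub_mul_eq t hτ m fun n hn => h n (by omega)]
    linear_combination h m m.lt_succ_self

theorem sum_mul_max_sub_eq_sum_range {c 𝔵 : ℕ → ℝ} {t : ℝ} {j N : ℕ} (hj : j ≤ N)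
    (hbelow : ∀ n < j, 𝔵 n ≤ t) (habove : ∀ n, j ≤ n → n < N → t ≤ 𝔵 n) :
    ∑ n ∈ range N, c n * max (t - 𝔵 n) 0 = ∑ n ∈ range j, c n * (t - 𝔵 n) := by
  rw [← sum_range_add_sum_Ico _ hj]
  have hzero : ∑ n ∈ Ico j N, c n * max (t - 𝔵 n) 0 = 0 := by
    refine sum_eq_zero fun n hn => ?_
    rw [mem_Ico] at hn
    rw [max_eq_right (sub_nonpos.mpr (habove n hn.1 hn.2)), mul_zero]
  rw [hzero, add_zero]
  refine sum_congr rfl fun n hn => ?_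
  rw [max_eq_left (sub_nonneg.mpr (hbelow n (mem_range.mp hn)))]

theorem exists_nodes_le_lt {K : ℕ} {𝔵 : ℕ → ℝ} (hx : ∀ k < K, 𝔵 k < 𝔵 (k + 1)) (t : ℝ) :
    ∃ j ≤ K + 1, (∀ n < j, 𝔵 n ≤ t) ∧ ∀ n, j ≤ n → n ≤ K → t < 𝔵 n := by
  have hmono : StrictMonoOn 𝔵 (Set.Iic K) := strictMonoOn_Iic_of_lt_succ fun m hm => by
    simpa using hx m hm
  have hex : ∃ j, j = K + 1 ∨ t < 𝔵 j := ⟨K + 1, Or.inl rfl⟩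
  refine ⟨Nat.find hex, ?_, fun n hn => ?_, fun n hjn hnK => ?_⟩
  · exact Nat.find_min' hex (Or.inl rfl)
  · exact not_lt.mp fun h => Nat.find_min hex hn (Or.inr h)
  · rcases Nat.find_spec hex with h | h
    · omega
    · exact h.trans_le (hmono.monotoneOn (Set.mem_Iic.mpr (by omega)) hnK hjn)

theorem stmt13_general (K : ℕ) (𝔵 fv : ℕ → ℝ) (ℒ : ℝ → ℝ)
    (hx : ∀ k, k < K → 𝔵 k < 𝔵 (k + 1))
    (hleft : ∀ x : ℝ, x < 𝔵 0 → ℒ x = fv 0)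
    (hright : ∀ x : ℝ, 𝔵 K ≤ x → ℒ x = fv K)
    (hmid : ∀ k, 1 ≤ k → k ≤ K → ∀ x : ℝ, 𝔵 (k - 1) ≤ x → x < 𝔵 k →
      ℒ x = fv (k - 1) + ((x - 𝔵 (k - 1)) / (𝔵 k - 𝔵 (k - 1))) * (fv k - fv (k - 1))) :
    ∀ x : ℝ,
      fv 0 + ∑ k ∈ Finset.range (K + 1),
        ((fv (min (k + 1) K) - fv k) / (𝔵 (min (k + 1) K) - 𝔵 (min k (K - 1)))
          - (fv k - fv (max (k - 1) 0)) / (𝔵 (max k 1) - 𝔵 (max (k - 1) 0)))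
          * max (x - 𝔵 k) 0
      = ℒ x := by
  intro x
  rw [sum_congr rfl fun k hk => by
    rw [div_min_eq_slope (mem_range_succ_iff.mp hk),
      div_max_eq_slope (mem_range_succ_iff.mp hk)]]
  obtain ⟨j, hjK, hbelow, habove⟩ := exists_nodes_le_lt hx x
  rw [sum_mul_max_sub_eq_sum_range hjK hbelow fun n hjn hnK => (habove n hjn (by omega)).le]
  rcases j with _ | m
  · simp [hleft x (habove 0 le_rfl (Nat.zero_le K))]
  rw [add_sum_range_sub_mul_eq x slope_zero m fun n hn => slope_mul_sub hx (by omega)]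
  rcases (Nat.lt_succ_iff.mp hjK).lt_or_eq with hm | rfl
  · rw [hmid (m + 1) (by omega) hm x (hbelow m m.lt_succ_self) (habove _ le_rfl hm),
      slope_succ_of_lt hm, Nat.add_sub_cancel]
    ring
  · rw [slope_of_lt m.lt_succ_self, hright x (hbelow m m.lt_succ_self)]
    ring

theorem stmt13 (K : ℕ) (hK : 1 ≤ K) (𝔵 fv : ℕ → ℝ) (ℒ : ℝ → ℝ)
    (hx : ∀ k, k < K → 𝔵 k < 𝔵 (k + 1))
    (hleft : ∀ x : ℝ, x < 𝔵 0 → ℒ x = fv 0)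
    (hright : ∀ x : ℝ, 𝔵 K ≤ x → ℒ x = fv K)
    (hmid : ∀ k, 1 ≤ k → k ≤ K → ∀ x : ℝ, 𝔵 (k - 1) ≤ x → x < 𝔵 k →
      ℒ x = fv (k - 1) + ((x - 𝔵 (k - 1)) / (𝔵 k - 𝔵 (k - 1))) * (fv k - fv (k - 1))) :
    ∀ x : ℝ,
      fv 0 + ∑ k ∈ Finset.range (K + 1),
        ((fv (min (k + 1) K) - fv k) / (𝔵 (min (k + 1) K) - 𝔵 (min k (K - 1)))
          - (fv k - fv (max (k - 1) 0)) / (𝔵 (max k 1) - 𝔵 (max (k - 1) 0)))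
          * max (x - 𝔵 k) 0
      = ℒ x :=
  stmt13_general K 𝔵 fv ℒ hx hleft hright hmid
end

section
/- Let K ∈ ℕ, b₁ ∈ ℝ, b₂ ∈ (b₁,∞), β ∈ (0,∞), let 𝔵_k = b₁ + k(b₂−b₁)/K for k = 0,...,K be the equidistant grid, let f: [b₁,b₂] → ℝ be L-Lipschitz, let 𝔞(x) = β^{−1}ln(1+exp(βx)), and define g: ℝ → ℝ by g(x) = f(𝔵₀) + Σ_{k=1}^K ((f(𝔵_k) − f(𝔵_{k−1}))/(𝔵_k − 𝔵_{k−1}))·(𝔞(x − 𝔵_{k−1}) − 𝔞(x − 𝔵_k)). Then g is L-Lipschitz on ℝ, i.e., |g(x) − g(y)| ≤ L|x−y| for all x,y ∈ ℝ. -/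
/-!
The derivative of `x ↦ β⁻¹ log (1 + exp (β (x - u)))` is the logistic sigmoid `σ (β (x - u))`, so
`g'` is a combination of the slopes `c_k` of `f` on the grid with weights
`σ (β (x - 𝔵_{k-1})) - σ (β (x - 𝔵_k))`. Since `σ` is increasing these weights are nonnegative,
and they telescope to `σ (β (x - 𝔵_0)) - σ (β (x - 𝔵_K)) ≤ 1`; as `|c_k| ≤ L`, this gives
`|g'| ≤ L` and the mean value theorem concludes.
-/

open Finset Real

noncomputable def softplus (β x : ℝ) : ℝ := β⁻¹ * log (1 + exp (β * x))

theorem hasDerivAt_softplus {β : ℝ} (hβ : β ≠ 0) (x : ℝ) :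
    HasDerivAt (softplus β) (sigmoid (β * x)) x := by
  have h := ((((hasDerivAt_id x).const_mul β).exp).const_add 1).log (by positivity)
    |>.const_mul β⁻¹
  refine h.congr_deriv ?_
  simp only [sigmoid, exp_neg, id, mul_one]
  field_simp
  ring

theorem sum_Icc_one_sub_telescope {M : Type*} [AddCommGroup M] (a : ℕ → M) (n : ℕ) :
    ∑ k ∈ Icc 1 n, (a (k - 1) - a k) = a 0 - a n := by
  induction n with
  | zero => simp
  | succ n ih =>
    rw [sum_Icc_succ_top (by omega), ih, Nat.add_sub_cancel]
    abel

theorem abs_sum_mul_le_of_sum_le_one {ι : Type*} {s : Finset ι} {c w : ι → ℝ} {L : ℝ}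
    (hL : 0 ≤ L) (hc : ∀ i ∈ s, |c i| ≤ L) (hw : ∀ i ∈ s, 0 ≤ w i) (hw1 : ∑ i ∈ s, w i ≤ 1) :
    |∑ i ∈ s, c i * w i| ≤ L :=
  calc |∑ i ∈ s, c i * w i|
      ≤ ∑ i ∈ s, |c i| * w i := by
        refine (abs_sum_le_sum_abs _ _).trans_eq (sum_congr rfl fun i hi => ?_)
        rw [abs_mul, abs_of_nonneg (hw i hi)]
    _ ≤ ∑ i ∈ s, L * w i := sum_le_sum fun i hi => mul_le_mul_of_nonneg_right (hc i hi) (hw i hi)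
    _ = L * ∑ i ∈ s, w i := (mul_sum _ _ _).symm
    _ ≤ L := mul_le_of_le_one_right hL hw1

theorem abs_div_sub_le_of_abs_sub_le {f : ℝ → ℝ} {L a b : ℝ} (hL : 0 ≤ L)
    (h : |f a - f b| ≤ L * |a - b|) : |(f a - f b) / (a - b)| ≤ L := by
  rcases eq_or_ne a b with rfl | hab
  · simpa using hL
  · rwa [abs_div, div_le_iff₀ (abs_pos.2 (sub_ne_zero.2 hab))]

theorem monotone_grid {a b : ℝ} (hab : a ≤ b) (K : ℕ) :
    Monotone fun k : ℕ => a + k * (b - a) / K := by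
  intro k m hkm
  have : (k : ℝ) ≤ m := by exact_mod_cast hkm
  simp only
  gcongr

theorem grid_mem_Icc {a b : ℝ} (hab : a ≤ b) {K k : ℕ} (hk : k ≤ K) :
    a + k * (b - a) / K ∈ Set.Icc a b := by
  have hkK : (k : ℝ) ≤ K := by exact_mod_cast hk
  have : k * (b - a) / K ≤ b - a :=
    div_le_of_le_mul₀ K.cast_nonneg (by linarith) (by nlinarith)
  constructor
  · have : 0 ≤ k * (b - a) / K := by have := sub_nonneg.2 hab; positivity
    linarith
  · linarith

noncomputable def softplusInterpolant (β a : ℝ) (c p : ℕ → ℝ) (K : ℕ) (x : ℝ) : ℝ :=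
  a + ∑ k ∈ Icc 1 K, c k * (softplus β (x - p (k - 1)) - softplus β (x - p k))

section softplusInterpolant

variable {β L : ℝ} {c p : ℕ → ℝ} {K : ℕ}

theorem hasDerivAt_softplusInterpolant (hβ : β ≠ 0) (a : ℝ) (x : ℝ) :
    HasDerivAt (softplusInterpolant β a c p K)
      (∑ k ∈ Icc 1 K, c k * (sigmoid (β * (x - p (k - 1))) - sigmoid (β * (x - p k)))) x := by
  have hshift (u : ℝ) : HasDerivAt (fun y => softplus β (y - u)) (sigmoid (β * (x - u))) x :=
    (hasDerivAt_softplus hβ (x - u)).comp_sub_const x u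
  exact (HasDerivAt.fun_sum fun k _ => ((hshift _).sub (hshift _)).const_mul (c k)).const_add a

theorem abs_sum_mul_sigmoid_sub_le (hβ : 0 ≤ β) (hp : Monotone p) (hL : 0 ≤ L)
    (hc : ∀ k ∈ Icc 1 K, |c k| ≤ L) (x : ℝ) :
    |∑ k ∈ Icc 1 K, c k * (sigmoid (β * (x - p (k - 1))) - sigmoid (β * (x - p k)))| ≤ L := by
  refine abs_sum_mul_le_of_sum_le_one hL hc (fun k _ => ?_) ?_
  · have : β * (x - p k) ≤ β * (x - p (k - 1)) :=
      mul_le_mul_of_nonneg_left (by linarith [hp (Nat.sub_le k 1)]) hβ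
    exact sub_nonneg.2 (sigmoid_le this)
  · rw [sum_Icc_one_sub_telescope (fun k => sigmoid (β * (x - p k)))]
    linarith [sigmoid_le_one (β * (x - p 0)), sigmoid_nonneg (β * (x - p K))]

theorem abs_softplusInterpolant_sub_le (hβ : 0 < β) (hp : Monotone p) (hL : 0 ≤ L)
    (hc : ∀ k ∈ Icc 1 K, |c k| ≤ L) (a x y : ℝ) :
    |softplusInterpolant β a c p K x - softplusInterpolant β a c p K y| ≤ L * |x - y| := by
  simpa only [Real.norm_eq_abs] using convex_univ.norm_image_sub_le_of_norm_hasDerivWithin_le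
    (fun t _ => (hasDerivAt_softplusInterpolant hβ.ne' a t).hasDerivWithinAt)
    (fun t _ => by simpa only [Real.norm_eq_abs] using abs_sum_mul_sigmoid_sub_le hβ.le hp hL hc t)
    (Set.mem_univ y) (Set.mem_univ x)

end softplusInterpolant

theorem stmt17_general (K : ℕ) (b₁ b₂ L β : ℝ) (hb : b₁ < b₂) (hβ : 0 < β)
    (𝔵 : ℕ → ℝ) (h𝔵 : ∀ k, 𝔵 k = b₁ + k * (b₂ - b₁) / K)
    (f : ℝ → ℝ)
    (hf : ∀ x ∈ Set.Icc b₁ b₂, ∀ y ∈ Set.Icc b₁ b₂, |f x - f y| ≤ L * |x - y|)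
    (g : ℝ → ℝ)
    (hg : ∀ x : ℝ, g x = f (𝔵 0) + ∑ k ∈ Finset.Icc 1 K,
      ((f (𝔵 k) - f (𝔵 (k - 1))) / (𝔵 k - 𝔵 (k - 1))) *
        (β⁻¹ * Real.log (1 + Real.exp (β * (x - 𝔵 (k - 1))))
          - β⁻¹ * Real.log (1 + Real.exp (β * (x - 𝔵 k))))) :
    ∀ x y : ℝ, |g x - g y| ≤ L * |x - y| := by
  have hL : 0 ≤ L := nonneg_of_mul_nonneg_left
    ((abs_nonneg _).trans (hf b₁ (by simp [hb.le]) b₂ (by simp [hb.le])))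
    (abs_pos.2 (sub_ne_zero.2 hb.ne))
  have h𝔵' : 𝔵 = fun k : ℕ => b₁ + k * (b₂ - b₁) / K := funext h𝔵
  have hmem {k : ℕ} (hk : k ≤ K) : 𝔵 k ∈ Set.Icc b₁ b₂ := h𝔵' ▸ grid_mem_Icc hb.le hk
  obtain rfl : g = softplusInterpolant β (f (𝔵 0))
      (fun k => (f (𝔵 k) - f (𝔵 (k - 1))) / (𝔵 k - 𝔵 (k - 1))) 𝔵 K := funext hg
  refine abs_softplusInterpolant_sub_le hβ (h𝔵' ▸ monotone_grid hb.le K) hL (fun k hk => ?_) _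
  obtain ⟨-, hkK⟩ := mem_Icc.1 hk
  exact abs_div_sub_le_of_abs_sub_le hL (hf _ (hmem hkK) _ (hmem (by omega)))

theorem stmt17 (K : ℕ) (hK : 1 ≤ K) (b₁ b₂ L β : ℝ) (hb : b₁ < b₂) (hβ : 0 < β)
    (𝔵 : ℕ → ℝ) (h𝔵 : ∀ k, 𝔵 k = b₁ + k * (b₂ - b₁) / K)
    (f : ℝ → ℝ)
    (hf : ∀ x ∈ Set.Icc b₁ b₂, ∀ y ∈ Set.Icc b₁ b₂, |f x - f y| ≤ L * |x - y|)
    (g : ℝ → ℝ)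
    (hg : ∀ x : ℝ, g x = f (𝔵 0) + ∑ k ∈ Finset.Icc 1 K,
      ((f (𝔵 k) - f (𝔵 (k - 1))) / (𝔵 k - 𝔵 (k - 1))) *
        (β⁻¹ * Real.log (1 + Real.exp (β * (x - 𝔵 (k - 1))))
          - β⁻¹ * Real.log (1 + Real.exp (β * (x - 𝔵 k))))) :
    ∀ x y : ℝ, |g x - g y| ≤ L * |x - y| :=
  stmt17_general K b₁ b₂ L β hb hβ 𝔵 h𝔵 f hf g hg
end
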